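/- Let M, M̄ ∈ Matrix (Fin n) (Fin n) ℂ with M̄ invertible, and define β = inf_{v ∈ ℂⁿ, v ≠ 0} Re(v* M̄* M v) / ‖M̄ v‖₂². Then β · σ_min(M̄) ≤ σ_min(M), where σ_min denotes the smallest singular value. -/

import Mathlib

open Matrix

/-- Euclidean (ℓ²) norm of a complex vector. -/
noncomputable def vecNorm {n : ℕ} (v : Fin n → ℂ) : ℝ :=
  Real.sqrt (∑ i, ‖v i‖ ^ 2)

/-- Smallest singular value of a square complex matrix. -/
noncomputable def sigmaMin {n : ℕ} (M : Matrix (Fin n) (Fin n) ℂ) : ℝ :=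
  ⨅ v : {v : Fin n → ℂ // vecNorm v = 1}, vecNorm (M.mulVec v.1)

/-- The NNSCM linearized stability factor
`β = inf_{v ≠ 0} Re(v* M̄* M v) / ‖M̄ v‖₂²`. -/
noncomputable def nnBeta {n : ℕ} (Mb M : Matrix (Fin n) (Fin n) ℂ) : ℝ :=
  ⨅ v : {v : Fin n → ℂ // v ≠ 0},
    (star v.1 ⬝ᵥ (Mbᴴ * M).mulVec v.1).re / ∑ i, ‖Mb.mulVec v.1 i‖ ^ 2

/-! For every `v`, the infimum defining `β` and Cauchy–Schwarz give
`β ‖M̄ v‖² ≤ Re ⟨M̄ v, M v⟩ ≤ ‖M̄ v‖ ‖M v‖`, hence `β ‖M̄ v‖ ≤ ‖M v‖`.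
For `β > 0` taking the infimum over unit vectors `v` yields `β σ_min(M̄) ≤ σ_min(M)`;
for `β ≤ 0` the claim is trivial. -/

theorem Matrix.star_dotProduct_conjTranspose_mul_mulVec {m n R : Type*} [Fintype m] [Fintype n]
    [CommSemiring R] [StarRing R] (A B : Matrix m n R) (v : n → R) :
    star v ⬝ᵥ (Aᴴ * B) *ᵥ v = star (A *ᵥ v) ⬝ᵥ B *ᵥ v := by
  rw [← mulVec_mulVec, dotProduct_mulVec, ← star_mulVec]

section vecNorm

variable {n : ℕ}

lemma vecNorm_eq_norm_toLp (v : Fin n → ℂ) : vecNorm v = ‖WithLp.toLp 2 v‖ := by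
  rw [EuclideanSpace.norm_eq]
  rfl

lemma vecNorm_nonneg (v : Fin n → ℂ) : 0 ≤ vecNorm v := Real.sqrt_nonneg _

@[simp]
lemma vecNorm_zero : vecNorm (0 : Fin n → ℂ) = 0 := by
  simp [vecNorm]

lemma vecNorm_sq (v : Fin n → ℂ) : vecNorm v ^ 2 = ∑ i, ‖v i‖ ^ 2 :=
  Real.sq_sqrt (by positivity)

lemma vecNorm_pos {v : Fin n → ℂ} (hv : v ≠ 0) : 0 < vecNorm v := by
  rw [vecNorm_eq_norm_toLp, norm_pos_iff]
  exact fun h => hv (congrArg WithLp.ofLp h)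

lemma re_star_dotProduct_le_vecNorm_mul (a b : Fin n → ℂ) :
    (star a ⬝ᵥ b).re ≤ vecNorm a * vecNorm b := by
  rw [dotProduct_comm, ← EuclideanSpace.inner_toLp_toLp, vecNorm_eq_norm_toLp,
    vecNorm_eq_norm_toLp]
  exact re_inner_le_norm (𝕜 := ℂ) _ _

end vecNorm

lemma sigmaMin_nonneg {n : ℕ} (M : Matrix (Fin n) (Fin n) ℂ) : 0 ≤ sigmaMin M :=
  Real.iInf_nonneg fun _ => vecNorm_nonneg _

lemma nnBeta_mul_vecNorm_le {n : ℕ} {Mb M : Matrix (Fin n) (Fin n) ℂ} (hβ : 0 < nnBeta Mb M)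
    (v : Fin n → ℂ) : nnBeta Mb M * vecNorm (Mb *ᵥ v) ≤ vecNorm (M *ᵥ v) := by
  rcases eq_or_ne (Mb *ᵥ v) 0 with hMbv | hMbv
  · simp only [hMbv, vecNorm_zero, mul_zero]
    exact vecNorm_nonneg _
  have hv : v ≠ 0 := by
    rintro rfl
    exact hMbv (mulVec_zero Mb)
  have hbdd : BddBelow (Set.range fun w : {w : Fin n → ℂ // w ≠ 0} =>
      (star w.1 ⬝ᵥ (Mbᴴ * M) *ᵥ w.1).re / ∑ i, ‖(Mb *ᵥ w.1) i‖ ^ 2) := by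
    -- an infimum over a set unbounded below is `0` in `ℝ`
    by_contra h
    exact hβ.ne' (Real.iInf_of_not_bddBelow h)
  have hN := vecNorm_pos hMbv
  have hβv : nnBeta Mb M * vecNorm (Mb *ᵥ v) ^ 2 ≤ (star v ⬝ᵥ (Mbᴴ * M) *ᵥ v).re := by
    rw [← le_div_iff₀ (by positivity), vecNorm_sq]
    exact ciInf_le hbdd ⟨v, hv⟩
  have hCS :
      (star v ⬝ᵥ (Mbᴴ * M) *ᵥ v).re ≤ vecNorm (Mb *ᵥ v) * vecNorm (M *ᵥ v) := by
    rw [star_dotProduct_conjTranspose_mul_mulVec]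
    exact re_star_dotProduct_le_vecNorm_mul _ _
  refine le_of_mul_le_mul_right ?_ hN
  calc nnBeta Mb M * vecNorm (Mb *ᵥ v) * vecNorm (Mb *ᵥ v)
      = nnBeta Mb M * vecNorm (Mb *ᵥ v) ^ 2 := by ring
    _ ≤ vecNorm (Mb *ᵥ v) * vecNorm (M *ᵥ v) := hβv.trans hCS
    _ = vecNorm (M *ᵥ v) * vecNorm (Mb *ᵥ v) := mul_comm _ _

theorem stmt8_general {n : ℕ} (M Mb : Matrix (Fin n) (Fin n) ℂ) :
    nnBeta Mb M * sigmaMin Mb ≤ sigmaMin M := by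
  rcases le_or_gt (nnBeta Mb M) 0 with hβ | hβ
  · exact (mul_nonpos_of_nonpos_of_nonneg hβ (sigmaMin_nonneg Mb)).trans (sigmaMin_nonneg M)
  calc nnBeta Mb M * sigmaMin Mb
      = ⨅ v : {v : Fin n → ℂ // vecNorm v = 1}, nnBeta Mb M * vecNorm (Mb *ᵥ v.1) :=
        Real.mul_iInf_of_nonneg hβ.le _
    _ ≤ sigmaMin M :=
        ciInf_mono ⟨0, Set.forall_mem_range.2 fun _ => mul_nonneg hβ.le (vecNorm_nonneg _)⟩
          fun v => nnBeta_mul_vecNorm_le hβ v.1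

/-- The key NNSCM inequality: `β(M, M̄) · σ_min(M̄) ≤ σ_min(M)` for invertible `M̄`. -/
theorem stmt8 {n : ℕ} (M Mb : Matrix (Fin n) (Fin n) ℂ) (hMb : IsUnit Mb) :
    nnBeta Mb M * sigmaMin Mb ≤ sigmaMin M :=
  stmt8_general M Mb
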